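/- arXiv:1403.1625 — 2 statements merged into one kernel-verified Lean document; each statement's English description precedes it below -/
import Mathlib

section
/- Let A = (b_k,i_k,e_k)_{k∈[ℓ]} be a word and let (V,c) ∈ 𝔠(A) be a 2-colored pair partition of [ℓ] compatible with A. For s ∈ [ℓ] let A_s denote the suffix word (b_k,i_k,e_k)_{k∈{s+1,…,ℓ}}. Then s ∈ D (for (V,c)) if and only if either (s ∈ R_V and |w^{A_s}_{c(s)}| ≥ |w^{A_s}_{−c(s)}|) or (s ∈ L_V and |w^{A_s}_{c(s)}| > |w^{A_s}_{−c(s)}|). -/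
open Finset

/-- `V` is a pair partition of `[n] = {1,…,n}`. -/
def IsPairPartitionOn (n : ℕ) (V : Finset (ℕ × ℕ)) : Prop :=
  (∀ p ∈ V, p.1 < p.2 ∧ 1 ≤ p.1 ∧ p.2 ≤ n) ∧
  (∀ k : ℕ, 1 ≤ k → k ≤ n → ∃! p : ℕ × ℕ, p ∈ V ∧ (p.1 = k ∨ p.2 = k))

/-- `p^b(u)`: the number of pairs `(l,r) ∈ V` with `l ≤ u ≤ r` of color `b`. -/
def pcount (V : Finset (ℕ × ℕ)) (c : ℕ → ℤ) (b : ℤ) (u : ℕ) : ℕ :=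
  (V.filter fun p => p.1 ≤ u ∧ u ≤ p.2 ∧ c p.1 = b).card

/-- `r(u) := p^{c(u)}(u)`. -/
def rcount (V : Finset (ℕ × ℕ)) (c : ℕ → ℤ) (u : ℕ) : ℕ :=
  pcount V c (c u) u

def isLeftPt (V : Finset (ℕ × ℕ)) (k : ℕ) : Prop := ∃ p ∈ V, p.1 = k

def isRightPt (V : Finset (ℕ × ℕ)) (k : ℕ) : Prop := ∃ p ∈ V, p.2 = k

/-- `k ∈ D`, i.e. `r(k) > p^{-c(k)}(k)`. -/
def inDom (V : Finset (ℕ × ℕ)) (c : ℕ → ℤ) (k : ℕ) : Prop :=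
  pcount V c (-(c k)) k < rcount V c k

/-- `|w^{A_s}_b|` for the suffix `A_s = (b_k,i_k,e_k)_{k ∈ {s+1,…,ℓ}}` of the word `A`:
the number of creation letters of color `b` minus the number of annihilation letters of
color `b` (that is, `Σ_n w^{A_s}_b(n)`). -/
def wTail (bA : ℕ → ℤ) (eA : ℕ → ℕ) (s ℓ : ℕ) (b : ℤ) : ℤ :=
  (((Finset.Icc (s + 1) ℓ).filter fun k => bA k = b ∧ eA k = 2).card : ℤ) -
  (((Finset.Icc (s + 1) ℓ).filter fun k => bA k = b ∧ eA k = 1).card : ℤ)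

section Aux

variable {ℓ : ℕ} {bA : ℕ → ℤ} {eA : ℕ → ℕ} {V : Finset (ℕ × ℕ)} {c : ℕ → ℤ}

lemma pair_unique (hV : IsPairPartitionOn ℓ V) {p q : ℕ × ℕ} (hp : p ∈ V) (hq : q ∈ V)
    {k : ℕ} (h1 : 1 ≤ k) (h2 : k ≤ ℓ) (hpk : p.1 = k ∨ p.2 = k) (hqk : q.1 = k ∨ q.2 = k) :
    p = q := by
  obtain ⟨r, _, hu⟩ := hV.2 k h1 h2
  rw [hu p ⟨hp, hpk⟩, hu q ⟨hq, hqk⟩]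

lemma card_creation (hV : IsPairPartitionOn ℓ V)
    (hcompat : ∀ p ∈ V, eA p.1 = 1 ∧ eA p.2 = 2 ∧ bA p.1 = c p.1 ∧ bA p.2 = c p.1 ∧
      True)
    (s : ℕ) (b : ℤ) :
    ((Finset.Icc (s + 1) ℓ).filter fun k => bA k = b ∧ eA k = 2).card
      = (V.filter fun p => s < p.2 ∧ c p.1 = b).card := by
  symm
  apply Finset.card_bij (fun p _ => p.2)
  · rintro p hp
    rw [Finset.mem_filter] at hp
    obtain ⟨hpV, hs, hb⟩ := hp
    obtain ⟨h12, h1, h2⟩ := hV.1 p hpV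
    obtain ⟨_, he2, _, hb2, _⟩ := hcompat p hpV
    simp only [Finset.mem_filter, Finset.mem_Icc]
    exact ⟨⟨hs, h2⟩, by rw [hb2, hb], he2⟩
  · intro p hp q hq h
    rw [Finset.mem_filter] at hp hq
    have h1p := hV.1 p hp.1
    have h1q := hV.1 q hq.1
    exact pair_unique hV hp.1 hq.1 (le_trans h1p.2.1 (le_of_lt h1p.1)) h1p.2.2
      (Or.inr rfl) (Or.inr (by omega))
  · intro k hk
    simp only [Finset.mem_filter, Finset.mem_Icc] at hk
    obtain ⟨⟨hk1, hk2⟩, hbk, hek⟩ := hk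
    obtain ⟨p, ⟨hpV, hpk⟩, _⟩ := hV.2 k (by omega) hk2
    obtain ⟨he1, _, hb1, hb2, _⟩ := hcompat p hpV
    have hk2' : p.2 = k := by
      rcases hpk with h | h
      · exfalso; rw [h] at he1; omega
      · exact h
    refine ⟨p, ?_, hk2'⟩
    rw [Finset.mem_filter]
    exact ⟨hpV, by omega, by rw [← hb2, hk2', hbk]⟩

lemma card_annihilation (hV : IsPairPartitionOn ℓ V)
    (hcompat : ∀ p ∈ V, eA p.1 = 1 ∧ eA p.2 = 2 ∧ bA p.1 = c p.1 ∧ bA p.2 = c p.1 ∧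
      True)
    (s : ℕ) (b : ℤ) :
    ((Finset.Icc (s + 1) ℓ).filter fun k => bA k = b ∧ eA k = 1).card
      = (V.filter fun p => s < p.1 ∧ c p.1 = b).card := by
  symm
  apply Finset.card_bij (fun p _ => p.1)
  · rintro p hp
    rw [Finset.mem_filter] at hp
    obtain ⟨hpV, hs, hb⟩ := hp
    obtain ⟨h12, h1, h2⟩ := hV.1 p hpV
    obtain ⟨he1, _, hb1, _, _⟩ := hcompat p hpV
    simp only [Finset.mem_filter, Finset.mem_Icc]
    exact ⟨⟨hs, by omega⟩, by rw [hb1, hb], he1⟩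
  · intro p hp q hq h
    rw [Finset.mem_filter] at hp hq
    have h1p := hV.1 p hp.1
    have h1q := hV.1 q hq.1
    exact pair_unique hV hp.1 hq.1 h1p.2.1 (by omega)
      (Or.inl rfl) (Or.inl (by omega))
  · intro k hk
    simp only [Finset.mem_filter, Finset.mem_Icc] at hk
    obtain ⟨⟨hk1, hk2⟩, hbk, hek⟩ := hk
    obtain ⟨p, ⟨hpV, hpk⟩, _⟩ := hV.2 k (by omega) hk2
    obtain ⟨_, he2, hb1, _, _⟩ := hcompat p hpV
    have hk1' : p.1 = k := by
      rcases hpk with h | h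
      · exact h
      · exfalso; rw [h] at he2; omega
    refine ⟨p, ?_, hk1'⟩
    rw [Finset.mem_filter]
    exact ⟨hpV, by omega, by rw [← hb1, hk1', hbk]⟩

lemma wTail_eq (hV : IsPairPartitionOn ℓ V)
    (hcompat : ∀ p ∈ V, eA p.1 = 1 ∧ eA p.2 = 2 ∧ bA p.1 = c p.1 ∧ bA p.2 = c p.1 ∧
      True)
    (s : ℕ) (b : ℤ) :
    wTail bA eA s ℓ b = ((V.filter fun p => p.1 ≤ s ∧ s < p.2 ∧ c p.1 = b).card : ℤ) := by
  unfold wTail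
  rw [card_creation hV hcompat s b, card_annihilation hV hcompat s b]
  have hsplit : (V.filter fun p => s < p.2 ∧ c p.1 = b)
      = (V.filter fun p => p.1 ≤ s ∧ s < p.2 ∧ c p.1 = b)
        ∪ (V.filter fun p => s < p.1 ∧ c p.1 = b) := by
    ext p
    simp only [Finset.mem_union, Finset.mem_filter]
    constructor
    · rintro ⟨hp, h2, hb⟩
      rcases le_or_gt p.1 s with h | h
      · exact Or.inl ⟨hp, h, h2, hb⟩
      · exact Or.inr ⟨hp, h, hb⟩
    · rintro (⟨hp, _, h2, hb⟩ | ⟨hp, h1, hb⟩)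
      · exact ⟨hp, h2, hb⟩
      · exact ⟨hp, lt_trans h1 (hV.1 p hp).1, hb⟩
  have hdisj : Disjoint (V.filter fun p => p.1 ≤ s ∧ s < p.2 ∧ c p.1 = b)
      (V.filter fun p => s < p.1 ∧ c p.1 = b) := by
    rw [Finset.disjoint_left]
    intro p hp hq
    rw [Finset.mem_filter] at hp hq
    omega
  rw [hsplit, Finset.card_union_of_disjoint hdisj]
  push_cast
  ring

lemma pcount_split (hV : IsPairPartitionOn ℓ V) (s : ℕ) (b : ℤ) :
    pcount V c b s = (V.filter fun p => p.1 ≤ s ∧ s < p.2 ∧ c p.1 = b).card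
      + (V.filter fun p => p.2 = s ∧ c p.1 = b).card := by
  unfold pcount
  have hsplit : (V.filter fun p => p.1 ≤ s ∧ s ≤ p.2 ∧ c p.1 = b)
      = (V.filter fun p => p.1 ≤ s ∧ s < p.2 ∧ c p.1 = b)
        ∪ (V.filter fun p => p.2 = s ∧ c p.1 = b) := by
    ext p
    simp only [Finset.mem_union, Finset.mem_filter]
    constructor
    · rintro ⟨hp, h1, h2, hb⟩
      rcases lt_or_eq_of_le h2 with h | h
      · exact Or.inl ⟨hp, h1, h, hb⟩
      · exact Or.inr ⟨hp, h.symm, hb⟩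
    · rintro (⟨hp, h1, h2, hb⟩ | ⟨hp, h2, hb⟩)
      · exact ⟨hp, h1, le_of_lt h2, hb⟩
      · have := (hV.1 p hp).1
        exact ⟨hp, by omega, by omega, hb⟩
  have hdisj : Disjoint (V.filter fun p => p.1 ≤ s ∧ s < p.2 ∧ c p.1 = b)
      (V.filter fun p => p.2 = s ∧ c p.1 = b) := by
    rw [Finset.disjoint_left]
    intro p hp hq
    rw [Finset.mem_filter] at hp hq
    omega
  rw [hsplit, Finset.card_union_of_disjoint hdisj]

end Aux

/-- for a word `A = (b_k,i_k,e_k)_{k∈[ℓ]}` and `(V,c) ∈ 𝔠(A)`,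
`s ∈ D` iff either `s ∈ R_V` and `|w^{A_s}_{c(s)}| ≥ |w^{A_s}_{-c(s)}|`, or `s ∈ L_V`
and `|w^{A_s}_{c(s)}| > |w^{A_s}_{-c(s)}|`. -/
theorem inDom_iff_suffix_weight (ℓ : ℕ) (bA : ℕ → ℤ) (iA eA : ℕ → ℕ)
    (hletters : ∀ k : ℕ, 1 ≤ k → k ≤ ℓ → (bA k = 1 ∨ bA k = -1) ∧ (eA k = 1 ∨ eA k = 2))
    (V : Finset (ℕ × ℕ)) (c : ℕ → ℤ)
    (hV : IsPairPartitionOn ℓ V)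
    (hcol : ∀ p ∈ V, c p.1 = c p.2)
    (hcval : ∀ k : ℕ, 1 ≤ k → k ≤ ℓ → c k = 1 ∨ c k = -1)
    (hcompat : ∀ p ∈ V, eA p.1 = 1 ∧ eA p.2 = 2 ∧ bA p.1 = c p.1 ∧ bA p.2 = c p.1 ∧
      iA p.1 = iA p.2)
    (s : ℕ) (hs1 : 1 ≤ s) (hs2 : s ≤ ℓ) :
    inDom V c s ↔
      (isRightPt V s ∧ wTail bA eA s ℓ (-(c s)) ≤ wTail bA eA s ℓ (c s)) ∨
      (isLeftPt V s ∧ wTail bA eA s ℓ (-(c s)) < wTail bA eA s ℓ (c s)) := by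
  have hcompat' : ∀ p ∈ V, eA p.1 = 1 ∧ eA p.2 = 2 ∧ bA p.1 = c p.1 ∧ bA p.2 = c p.1 ∧
      True := fun p hp => by
    obtain ⟨h1, h2, h3, h4, _⟩ := hcompat p hp
    exact ⟨h1, h2, h3, h4, trivial⟩
  have hcs : c s ≠ -(c s) := by
    rcases hcval s hs1 hs2 with h | h <;> rw [h] <;> decide
  obtain ⟨q, ⟨hqV, hqk⟩, _⟩ := hV.2 s hs1 hs2
  have hq12 := (hV.1 q hqV).1
  have hw1 := wTail_eq hV hcompat' s (c s)
  have hw2 := wTail_eq hV hcompat' s (-(c s))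
  have hp1 := pcount_split (c := c) hV s (c s)
  have hp2 := pcount_split (c := c) hV s (-(c s))
  rcases hqk with hL | hR
  · -- s is a left point
    have hLpt : isLeftPt V s := ⟨q, hqV, hL⟩
    have hnR : ¬ isRightPt V s := by
      rintro ⟨p, hpV, hp2'⟩
      have h := pair_unique hV hpV hqV hs1 hs2 (Or.inr hp2') (Or.inl hL)
      rw [h] at hp2'
      omega
    have hE : ∀ b : ℤ, (V.filter fun p => p.2 = s ∧ c p.1 = b) = ∅ := by
      intro b
      rw [Finset.eq_empty_iff_forall_notMem]
      intro p hp
      rw [Finset.mem_filter] at hp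
      have h := pair_unique hV hp.1 hqV hs1 hs2 (Or.inr hp.2.1) (Or.inl hL)
      have h2 := hp.2.1
      rw [h] at h2
      omega
    rw [hE, Finset.card_empty] at hp1 hp2
    unfold inDom rcount
    rw [hp1, hp2]
    constructor
    · intro h
      right
      refine ⟨hLpt, ?_⟩
      rw [hw1, hw2]
      exact_mod_cast (by omega : (V.filter fun p => p.1 ≤ s ∧ s < p.2 ∧ c p.1 = -(c s)).card
        < (V.filter fun p => p.1 ≤ s ∧ s < p.2 ∧ c p.1 = c s).card)
    · rintro (⟨hR, _⟩ | ⟨_, hlt⟩)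
      · exact absurd hR hnR
      · rw [hw1, hw2] at hlt
        omega
  · -- s is a right point
    have hRpt : isRightPt V s := ⟨q, hqV, hR⟩
    have hnL : ¬ isLeftPt V s := by
      rintro ⟨p, hpV, hp1'⟩
      have h := pair_unique hV hpV hqV hs1 hs2 (Or.inl hp1') (Or.inr hR)
      rw [h] at hp1'
      omega
    have hcq : c q.1 = c s := by rw [hcol q hqV, hR]
    have hE1 : (V.filter fun p => p.2 = s ∧ c p.1 = c s) = {q} := by
      ext p
      simp only [Finset.mem_filter, Finset.mem_singleton]
      constructor
      · rintro ⟨hpV, hp2', _⟩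
        exact pair_unique hV hpV hqV hs1 hs2 (Or.inr hp2') (Or.inr hR)
      · rintro rfl
        exact ⟨hqV, hR, hcq⟩
    have hE2 : (V.filter fun p => p.2 = s ∧ c p.1 = -(c s)) = ∅ := by
      rw [Finset.eq_empty_iff_forall_notMem]
      intro p hp
      rw [Finset.mem_filter] at hp
      have hpq := pair_unique hV hp.1 hqV hs1 hs2 (Or.inr hp.2.1) (Or.inr hR)
      have h2 : c q.1 = -(c s) := by rw [← hpq]; exact hp.2.2
      rw [hcq] at h2
      exact hcs h2
    rw [hE1, Finset.card_singleton] at hp1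
    rw [hE2, Finset.card_empty] at hp2
    unfold inDom rcount
    rw [hp1, hp2]
    constructor
    · intro h
      left
      refine ⟨hRpt, ?_⟩
      rw [hw1, hw2]
      exact_mod_cast (by omega : (V.filter fun p => p.1 ≤ s ∧ s < p.2 ∧ c p.1 = -(c s)).card
        ≤ (V.filter fun p => p.1 ≤ s ∧ s < p.2 ∧ c p.1 = c s).card)
    · rintro (⟨_, hle⟩ | ⟨hL, _⟩)
      · rw [hw1, hw2] at hle
        omega
      · exact absurd hL hnL
end

section
/- Let A be a word indexed by [ℓ_A] and B a word indexed by [ℓ_B], and let B*A denote the word indexed by −[ℓ_B] ∪ [ℓ_A] (ordered as integers) whose letter at position −j (j ∈ [ℓ_B]) is the adjoint (b'_j, i'_j, 3 − e'_j) of the j-th letter (b'_j,i'_j,e'_j) of B, and whose letter at position k ∈ [ℓ_A] is the k-th letter of A. Let (V,c) ∈ 𝔠(B*A), and let π_V be the involution of the index set interchanging the two points of each pair of V. Then for every b ∈ {−1,1} and every i ∈ ℕ there exist unique subsets Y+ ⊆ [ℓ_A] and Y− ⊆ −[ℓ_B] such that: (1) |Y+| = |Y−| = w^A_b(i); (2)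 every k ∈ Y+ carries the letter (b,i,2); (3) every k ∈ Y− carries the letter (b,i,1); (4) π_V(k) ∈ Y− for every k ∈ Y+; (5) π_V(k) ∈ Y+ for every k ∈ Y−. -/
open Finset

/-- `V` is a pair partition of the finite totally ordered set `S ⊆ ℤ`. -/
def IsPPOn (S : Finset ℤ) (V : Finset (ℤ × ℤ)) : Prop :=
  (∀ p ∈ V, p.1 < p.2 ∧ p.1 ∈ S ∧ p.2 ∈ S) ∧
  (∀ k ∈ S, ∃! p : ℤ × ℤ, p ∈ V ∧ (p.1 = k ∨ p.2 = k))

/-- The color component of the word `B*A` on `-[ℓ_B] ∪ [ℓ_A]`: at position `-j` it is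
the color of the `j`-th letter of `B`, at position `k > 0` the color of the `k`-th
letter of `A`. -/
def wordB (bB bA : ℕ → ℤ) : ℤ → ℤ := fun k => if k < 0 then bB (-k).toNat else bA k.toNat

/-- The index component of the word `B*A`. -/
def wordI (iB iA : ℕ → ℕ) : ℤ → ℕ := fun k => if k < 0 then iB (-k).toNat else iA k.toNat

/-- The creation/annihilation component of the word `B*A`: at position `-j` the letter
is the adjoint `(b,i,3-e)` of the `j`-th letter of `B`. -/
def wordE (eB eA : ℕ → ℕ) : ℤ → ℕ := fun k => if k < 0 then 3 - eB (-k).toNat else eA k.toNat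

/-- for a 2-colored pair partition `(V,c)` compatible with the word
`B*A`, for every `b ∈ {-1,1}` and `i ∈ ℕ` there is a unique pair of subsets
`Y⁺ ⊆ [ℓ_A]`, `Y⁻ ⊆ -[ℓ_B]` with `|Y⁺| = |Y⁻| = w^A_b(i)`, all positions of `Y⁺`
carrying the letter `(b,i,2)`, all positions of `Y⁻` carrying the letter `(b,i,1)`,
and `π_V` interchanging `Y⁺` and `Y⁻`. -/
theorem existsUnique_matching_sets (ℓA ℓB : ℕ)
    (bA : ℕ → ℤ) (iA eA : ℕ → ℕ) (bB : ℕ → ℤ) (iB eB : ℕ → ℕ)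
    (hlA : ∀ k : ℕ, 1 ≤ k → k ≤ ℓA → (bA k = 1 ∨ bA k = -1) ∧ (eA k = 1 ∨ eA k = 2))
    (hlB : ∀ k : ℕ, 1 ≤ k → k ≤ ℓB → (bB k = 1 ∨ bB k = -1) ∧ (eB k = 1 ∨ eB k = 2))
    (V : Finset (ℤ × ℤ)) (c : ℤ → ℤ)
    (hV : IsPPOn (((Finset.Icc 1 ℓB).image fun j : ℕ => -(j : ℤ)) ∪
      ((Finset.Icc 1 ℓA).image fun k : ℕ => (k : ℤ))) V)
    (hcol : ∀ p ∈ V, c p.1 = c p.2)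
    (hcompat : ∀ p ∈ V, wordE eB eA p.1 = 1 ∧ wordE eB eA p.2 = 2 ∧
      wordB bB bA p.1 = c p.1 ∧ wordB bB bA p.2 = c p.1 ∧ wordI iB iA p.1 = wordI iB iA p.2)
    (π : ℤ → ℤ) (hπ : ∀ p ∈ V, π p.1 = p.2 ∧ π p.2 = p.1)
    (b : ℤ) (hb : b = 1 ∨ b = -1) (i : ℕ) :
    ∃! Y : Finset ℤ × Finset ℤ,
      Y.1 ⊆ (Finset.Icc 1 ℓA).image (fun k : ℕ => (k : ℤ)) ∧
      Y.2 ⊆ (Finset.Icc 1 ℓB).image (fun j : ℕ => -(j : ℤ)) ∧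
      (Y.1.card : ℤ) =
        (((Finset.Icc 1 ℓA).filter fun k => bA k = b ∧ iA k = i ∧ eA k = 2).card : ℤ) -
        (((Finset.Icc 1 ℓA).filter fun k => bA k = b ∧ iA k = i ∧ eA k = 1).card : ℤ) ∧
      (Y.2.card : ℤ) =
        (((Finset.Icc 1 ℓA).filter fun k => bA k = b ∧ iA k = i ∧ eA k = 2).card : ℤ) -
        (((Finset.Icc 1 ℓA).filter fun k => bA k = b ∧ iA k = i ∧ eA k = 1).card : ℤ) ∧
      (∀ k ∈ Y.1, wordB bB bA k = b ∧ wordI iB iA k = i ∧ wordE eB eA k = 2) ∧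
      (∀ k ∈ Y.2, wordB bB bA k = b ∧ wordI iB iA k = i ∧ wordE eB eA k = 1) ∧
      (∀ k ∈ Y.1, π k ∈ Y.2) ∧ (∀ k ∈ Y.2, π k ∈ Y.1) := by
  classical
  set Tm : Finset ℤ := (Finset.Icc 1 ℓB).image fun j : ℕ => -(j : ℤ) with hTmdef
  set Tp : Finset ℤ := (Finset.Icc 1 ℓA).image fun k : ℕ => (k : ℤ) with hTpdef
  have hTmneg : ∀ k ∈ Tm, k < 0 := by
    intro k hk
    simp only [hTmdef, mem_image, mem_Icc] at hk
    obtain ⟨j, ⟨hj1, hj2⟩, rfl⟩ := hk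
    omega
  have hTppos : ∀ k ∈ Tp, 0 < k := by
    intro k hk
    simp only [hTpdef, mem_image, mem_Icc] at hk
    obtain ⟨j, ⟨hj1, hj2⟩, rfl⟩ := hk
    omega
  have hmemTp : ∀ k ∈ Tm ∪ Tp, ¬ k < 0 → k ∈ Tp := by
    intro k hk hk0
    rcases mem_union.1 hk with h | h
    · exact absurd (hTmneg k h) hk0
    · exact h
  have hmemTm : ∀ k ∈ Tm ∪ Tp, k < 0 → k ∈ Tm := by
    intro k hk hk0
    rcases mem_union.1 hk with h | h
    · exact h
    · exact absurd (hTppos k h) (by omega)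
  -- key facts about the partner of a creation (e = 2)
  have key2 : ∀ k ∈ Tm ∪ Tp, wordE eB eA k = 2 →
      π k ∈ Tm ∪ Tp ∧ π (π k) = k ∧ wordE eB eA (π k) = 1 ∧
      wordB bB bA (π k) = wordB bB bA k ∧ wordI iB iA (π k) = wordI iB iA k := by
    intro k hk he
    obtain ⟨p, ⟨hpV, hp⟩, _⟩ := hV.2 k hk
    obtain ⟨hπ1, hπ2⟩ := hπ p hpV
    obtain ⟨he1, he2, hb1, hb2, hi⟩ := hcompat p hpV
    obtain ⟨_, hm1, hm2⟩ := hV.1 p hpV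
    rcases hp with h | h
    · rw [h] at he1; omega
    · subst h
      refine ⟨by rw [hπ2]; exact hm1, by rw [hπ2, hπ1], by rw [hπ2]; exact he1, ?_, ?_⟩
      · rw [hπ2, hb1, hb2]
      · rw [hπ2, hi]
  -- key facts about the partner of an annihilation (e = 1)
  have key1 : ∀ k ∈ Tm ∪ Tp, wordE eB eA k = 1 →
      π k ∈ Tm ∪ Tp ∧ π (π k) = k ∧ wordE eB eA (π k) = 2 ∧
      wordB bB bA (π k) = wordB bB bA k ∧ wordI iB iA (π k) = wordI iB iA k ∧ k < π k := by
    intro k hk he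
    obtain ⟨p, ⟨hpV, hp⟩, _⟩ := hV.2 k hk
    obtain ⟨hπ1, hπ2⟩ := hπ p hpV
    obtain ⟨he1, he2, hb1, hb2, hi⟩ := hcompat p hpV
    obtain ⟨hlt, hm1, hm2⟩ := hV.1 p hpV
    rcases hp with h | h
    · subst h
      refine ⟨by rw [hπ1]; exact hm2, by rw [hπ1, hπ2], by rw [hπ1]; exact he2, ?_, ?_, by rw [hπ1]; exact hlt⟩
      · rw [hπ1, hb1, hb2]
      · rw [hπ1, hi]
    · rw [h] at he2; omega
  set Q2 : Finset ℤ := Tp.filter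
    (fun k => wordB bB bA k = b ∧ wordI iB iA k = i ∧ wordE eB eA k = 2) with hQ2def
  set Q1 : Finset ℤ := Tp.filter
    (fun k => wordB bB bA k = b ∧ wordI iB iA k = i ∧ wordE eB eA k = 1) with hQ1def
  set Yp : Finset ℤ := Q2.filter (fun k => π k < 0) with hYpdef
  set Ym : Finset ℤ := Yp.image π with hYmdef
  have hQ2S : ∀ k ∈ Q2, k ∈ Tm ∪ Tp := fun k hk => mem_union_right _ (mem_filter.1 hk).1
  have hQ1S : ∀ k ∈ Q1, k ∈ Tm ∪ Tp := fun k hk => mem_union_right _ (mem_filter.1 hk).1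
  -- cardinality: Yp.card + Q1.card = Q2.card
  have hsplit : (Q2.filter (fun k => π k < 0)).card +
      (Q2.filter (fun k => ¬ π k < 0)).card = Q2.card :=
    Finset.card_filter_add_card_filter_not _
  have hbij : (Q2.filter (fun k => ¬ π k < 0)).card = Q1.card := by
    apply Finset.card_bij' (fun k _ => π k) (fun l _ => π l)
    · intro k hk
      obtain ⟨hkQ2, hknn⟩ := mem_filter.1 hk
      obtain ⟨hkTp, hbk, hik, hek⟩ := mem_filter.1 hkQ2
      obtain ⟨hS, hinv, he', hb', hi'⟩ := key2 k (mem_union_right _ hkTp) hek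
      refine mem_filter.2 ⟨hmemTp _ hS hknn, ?_, ?_, he'⟩
      · rw [hb', hbk]
      · rw [hi', hik]
    · intro l hl
      obtain ⟨hlTp, hbl, hil, hel⟩ := mem_filter.1 hl
      obtain ⟨hS, hinv, he', hb', hi', hlt⟩ := key1 l (mem_union_right _ hlTp) hel
      have hl0 := hTppos l hlTp
      refine mem_filter.2 ⟨mem_filter.2 ⟨hmemTp _ hS (by omega), ?_, ?_, he'⟩, ?_⟩
      · rw [hb', hbl]
      · rw [hi', hil]
      · rw [hinv]; omega
    · intro k hk
      obtain ⟨hkQ2, _⟩ := mem_filter.1 hk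
      obtain ⟨hkTp, _, _, hek⟩ := mem_filter.1 hkQ2
      exact (key2 k (mem_union_right _ hkTp) hek).2.1
    · intro l hl
      obtain ⟨hlTp, _, _, hel⟩ := mem_filter.1 hl
      exact (key1 l (mem_union_right _ hlTp) hel).2.1
  -- identify Q2, Q1 cards with the natural-number filters
  have hcast : ∀ (e : ℕ), (Tp.filter
      (fun k => wordB bB bA k = b ∧ wordI iB iA k = i ∧ wordE eB eA k = e)).card =
      ((Finset.Icc 1 ℓA).filter fun k => bA k = b ∧ iA k = i ∧ eA k = e).card := by
    intro e
    have himg : Tp.filter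
        (fun k => wordB bB bA k = b ∧ wordI iB iA k = i ∧ wordE eB eA k = e) =
        (((Finset.Icc 1 ℓA).filter fun k => bA k = b ∧ iA k = i ∧ eA k = e)).image
          (fun k : ℕ => (k : ℤ)) := by
      ext x
      simp only [hTpdef, mem_filter, mem_image, mem_Icc, wordB, wordI, wordE]
      constructor
      · rintro ⟨⟨a, ha, rfl⟩, h1, h2, h3⟩
        refine ⟨a, ⟨ha, ?_⟩, rfl⟩
        have hneg : ¬ (a : ℤ) < 0 := by omega
        rw [if_neg hneg] at h1 h2 h3
        simpa using ⟨h1, h2, h3⟩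
      · rintro ⟨a, ⟨ha, h1, h2, h3⟩, rfl⟩
        have hneg : ¬ (a : ℤ) < 0 := by omega
        refine ⟨⟨a, ha, rfl⟩, ?_, ?_, ?_⟩ <;> rw [if_neg hneg] <;> simpa
    rw [himg, Finset.card_image_of_injective _ (fun a c h => by exact_mod_cast h)]
  have hQ2card := hcast 2
  have hQ1card := hcast 1
  rw [← hQ2def] at hQ2card
  rw [← hQ1def] at hQ1card
  -- π is injective on Yp
  have hinjYp : Set.InjOn π ↑Yp := by
    intro x hx y hy hxy
    obtain ⟨hxQ2, _⟩ := mem_filter.1 hx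
    obtain ⟨hxTp, _, _, hex⟩ := mem_filter.1 hxQ2
    obtain ⟨hyQ2, _⟩ := mem_filter.1 hy
    obtain ⟨hyTp, _, _, hey⟩ := mem_filter.1 hyQ2
    have h1 := (key2 x (mem_union_right _ hxTp) hex).2.1
    have h2 := (key2 y (mem_union_right _ hyTp) hey).2.1
    rw [← h1, ← h2, hxy]
  have hYmcard : Ym.card = Yp.card := Finset.card_image_of_injOn hinjYp
  have hYpcardZ : (Yp.card : ℤ) =
      (((Finset.Icc 1 ℓA).filter fun k => bA k = b ∧ iA k = i ∧ eA k = 2).card : ℤ) -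
      (((Finset.Icc 1 ℓA).filter fun k => bA k = b ∧ iA k = i ∧ eA k = 1).card : ℤ) := by
    rw [← hQ2card, ← hQ1card, ← hsplit, hbij]
    push_cast
    ring
  -- properties of Ym
  have hYmprop : ∀ j ∈ Ym, j ∈ Tm ∧ wordB bB bA j = b ∧ wordI iB iA j = i ∧
      wordE eB eA j = 1 ∧ π j ∈ Yp := by
    intro j hj
    obtain ⟨k, hk, rfl⟩ := mem_image.1 hj
    obtain ⟨hkQ2, hkneg⟩ := mem_filter.1 hk
    obtain ⟨hkTp, hbk, hik, hek⟩ := mem_filter.1 hkQ2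
    obtain ⟨hS, hinv, he', hb', hi'⟩ := key2 k (mem_union_right _ hkTp) hek
    exact ⟨hmemTm _ hS hkneg, by rw [hb', hbk], by rw [hi', hik], he', by rw [hinv]; exact hk⟩
  refine ⟨(Yp, Ym), ⟨?_, ?_, ?_, ?_, ?_, ?_, ?_, ?_⟩, ?_⟩
  · exact (Finset.filter_subset _ _).trans (Finset.filter_subset _ _)
  · intro j hj; exact (hYmprop j hj).1
  · exact hYpcardZ
  · rw [hYmcard]; exact hYpcardZ
  · intro k hk
    obtain ⟨hkQ2, _⟩ := mem_filter.1 hk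
    obtain ⟨_, hbk, hik, hek⟩ := mem_filter.1 hkQ2
    exact ⟨hbk, hik, hek⟩
  · intro j hj
    obtain ⟨_, h1, h2, h3, _⟩ := hYmprop j hj
    exact ⟨h1, h2, h3⟩
  · intro k hk; exact mem_image_of_mem π hk
  · intro j hj; exact (hYmprop j hj).2.2.2.2
  -- uniqueness
  rintro ⟨Y1, Y2⟩ ⟨h1, h2, h3, h4, h5, h6, h7, h8⟩
  have hY1sub : Y1 ⊆ Yp := by
    intro k hk
    have hkTp : k ∈ Tp := h1 hk
    obtain ⟨hbk, hik, hek⟩ := h5 k hk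
    refine mem_filter.2 ⟨mem_filter.2 ⟨hkTp, hbk, hik, hek⟩, ?_⟩
    exact hTmneg _ (h2 (h7 k hk))
  have hY1card : Y1.card = Yp.card := by
    have := h3.trans hYpcardZ.symm
    exact_mod_cast this
  have hY1 : Y1 = Yp := Finset.eq_of_subset_of_card_le hY1sub (le_of_eq hY1card.symm)
  have hY2sub : Y2 ⊆ Ym := by
    intro j hj
    have hjTm : j ∈ Tm := h2 hj
    obtain ⟨hbj, hij, hej⟩ := h6 j hj
    have hinv := (key1 j (mem_union_left _ hjTm) hej).2.1
    have hπj : π j ∈ Yp := by rw [← hY1]; exact h8 j hj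
    rw [← hinv]
    exact mem_image_of_mem π hπj
  have hY2card : Y2.card = Ym.card := by
    rw [hYmcard]
    have := h4.trans hYpcardZ.symm
    exact_mod_cast this
  have hY2 : Y2 = Ym := Finset.eq_of_subset_of_card_le hY2sub (le_of_eq hY2card.symm)
  exact Prod.ext hY1 hY2
end
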